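/- Let k be an algebraically closed field of characteristic p > 0, n ≥ 1, and let W_n(k(x)) be the ring of length-n truncated Witt vectors over k(x), with ℘ := F − id : W_n(k(x)) → W_n(k(x)) the Artin–Schreier–Witt isogeny (Frobenius minus identity). Call a Witt vector (f^1, …, f^n) ∈ W_n(k(x)) reduced if each component f^i is a finite k-linear combination of functions (x − a)^{−j} with a ∈ k and j a positive integer prime to p, and of monomials x^j with j a positive integer prime to p. Then every G ∈ W_n(k(x)) is congruent modulo ℘(W_n(k(x))) to a reduced Witt vector, and this reduced representative is unique: if F' and F'' are both reduced and F' − F'' ∈ ℘(W_n(k(x))), then F' = F''. -/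

import Mathlib

/-- A rational function `f ∈ k(x)` is *reduced* if it is a finite `k`-linear combination
of functions `(x − a)^{−j}` (`a ∈ k`, `j ≥ 1`, `p ∤ j`) and of monomials `x^j`
(`j ≥ 1`, `p ∤ j`); i.e. its partial fraction decomposition consists only of
prime-to-`p`-degree terms. -/
def IsReducedRatFunc (p : ℕ) (k : Type) [Field k] (f : RatFunc k) : Prop :=
  f ∈ Submodule.span k
    ({g : RatFunc k | ∃ (a : k) (j : ℕ), 0 < j ∧ ¬ p ∣ j ∧
        g = ((RatFunc.X - RatFunc.C a) ^ j)⁻¹} ∪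
      {g : RatFunc k | ∃ j : ℕ, 0 < j ∧ ¬ p ∣ j ∧ g = RatFunc.X ^ j})

/-- The Artin–Schreier–Witt isogeny `℘ = F − id` on length-`n` truncated Witt vectors
over a ring of characteristic `p`; here the Witt vector Frobenius `F` acts
coefficientwise by `y ↦ y^p` (as it does over any ring of characteristic `p`). -/
noncomputable def aswIsogeny (p n : ℕ) [Fact p.Prime] (k : Type) [Field k]
    (B : TruncatedWittVector p n (RatFunc k)) : TruncatedWittVector p n (RatFunc k) :=
  TruncatedWittVector.mk p (fun i => (TruncatedWittVector.coeff i B) ^ p) - B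

/-!
For `n = 1` the theorem says that the reduced functions form an additive complement of
`℘(k(x)) = {b ^ p - b}`. The two span `k(x)` by partial fractions, since
`c x^{pj} = ℘(d x^j) + d x^j` when `d ^ p = c` (likewise for the poles `(x - a)^{-pj}`), and since
every constant is a value of `℘` on the algebraically closed field `k`. They meet trivially:
a reduced function has no Laurent coefficient of index `-pm`, `m > 0`, at any point of `ℙ¹`,
while a pole of order `m` of `b` gives `b ^ p - b` the nonzero coefficient `lc^p` of that index;
so `b` is constant, and a reduced constant vanishes.

Witt vectors are then handled coordinate by coordinate: when two Witt vectors agree below index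
`m`, the `m`-th coordinate of their difference is the difference of their `m`-th coordinates, so
the `m`-th coordinate can be corrected by `℘` of a Witt vector supported in degree `m` without
changing the earlier ones.
-/

open Polynomial HahnSeries

noncomputable def artinSchreier (R : Type*) [CommRing R] (p : ℕ) [ExpChar R p] : R →+ R :=
  (frobenius R p).toAddMonoidHom - AddMonoidHom.id R

@[simp]
theorem artinSchreier_apply (R : Type*) [CommRing R] (p : ℕ) [ExpChar R p] (b : R) :
    artinSchreier R p b = b ^ p - b := rfl

section ArtinSchreier

variable {R : Type*} [CommRing R] {p : ℕ} [ExpChar R p]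

theorem pow_mem_sup_range_artinSchreier {S : AddSubgroup R} {x : R}
    (hx : x ∈ S ⊔ (artinSchreier R p).range) : x ^ p ∈ S ⊔ (artinSchreier R p).range := by
  rw [← sub_add_cancel (x ^ p) x]
  exact add_mem (AddSubgroup.mem_sup_right ⟨x, rfl⟩) hx

theorem smul_pow_mem_sup_range_artinSchreier {k : Type*} [Field k] [ExpChar k p]
    [PerfectRing k p] [Algebra k R] [Fact p.Prime] (S : Submodule k R) {u : R}
    (hu : ∀ j, 0 < j → ¬ p ∣ j → u ^ j ∈ S) (c : k) {j : ℕ} (hj : 0 < j) :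
    c • u ^ j ∈ S.toAddSubgroup ⊔ (artinSchreier R p).range := by
  induction j using Nat.strong_induction_on generalizing c with
  | _ j ih =>
    by_cases hpj : p ∣ j
    · obtain ⟨j, rfl⟩ := hpj
      obtain ⟨d, rfl⟩ := surjective_frobenius k p c
      have hj' : 0 < j := Nat.pos_of_mul_pos_left hj
      rw [frobenius_def, pow_mul', ← _root_.smul_pow]
      exact pow_mem_sup_range_artinSchreier
        (ih j (lt_mul_left hj' (Fact.out : p.Prime).one_lt) d hj')
    · exact AddSubgroup.mem_sup_left (S.smul_mem c (hu j hj hpj))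

theorem algebraMap_mem_range_artinSchreier {k : Type*} [Field k] [IsAlgClosed k] [Algebra k R]
    (hp : 1 < p) (c : k) : algebraMap k R c ∈ (artinSchreier R p).range := by
  have hdeg : (X ^ p - X - Polynomial.C c : k[X]).degree = p := by
    rw [sub_sub, degree_sub_eq_left_of_degree_lt] <;> rw [degree_X_pow]
    rw [degree_X_add_C]
    exact_mod_cast hp
  obtain ⟨d, hd⟩ :=
    IsAlgClosed.exists_root _ (by rw [hdeg]; exact_mod_cast (zero_lt_one.trans hp).ne')
  refine ⟨algebraMap k R d, ?_⟩
  simp only [IsRoot, eval_sub, eval_pow, eval_X, eval_C, sub_eq_zero] at hd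
  simp [← map_pow, ← map_sub, hd]

end ArtinSchreier

namespace WittVector

variable {p : ℕ} [Fact p.Prime] {R : Type*} [CommRing R]

local notation "𝕎" => WittVector p

theorem sub_coeff_zero (x y : 𝕎 R) : (x - y).coeff 0 = x.coeff 0 - y.coeff 0 :=
  eq_sub_of_add_eq (by rw [← add_coeff_zero, sub_add_cancel])

theorem coeff_sub_of_coeff_eq {x y : 𝕎 R} {m : ℕ} (h : ∀ i < m, x.coeff i = y.coeff i) :
    (x - y).coeff m = x.coeff m - y.coeff m := by
  have hinit : init m x = init m y := by
    ext i
    simp only [init, select, coeff_mk]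
    split_ifs with hi
    · exact h i hi
    · rfl
  have htail (z : 𝕎 R) : tail m z = verschiebung^[m] ((tail m z).shift m) :=
    eq_iterate_verschiebung fun i hi => by simp [tail, select, coeff_mk, not_le.mpr hi]
  have hsub : x - y = verschiebung^[m] ((tail m x).shift m - (tail m y).shift m) := by
    rw [iterate_map_sub (verschiebung : 𝕎 R →+ 𝕎 R), ← htail, ← htail]
    conv_lhs => rw [← init_add_tail x m, ← init_add_tail y m, hinit]
    abel
  have hcoeff := iterate_verschiebung_coeff ((tail m x).shift m - (tail m y).shift m) m 0
  rw [zero_add] at hcoeff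
  rw [hsub, hcoeff, sub_coeff_zero]
  simp [shift_coeff, tail, select]

variable [CharP R p] {S : AddSubgroup R}

theorem coeff_frobenius_sub_self_of_coeff_pow_eq {B : 𝕎 R} {m : ℕ}
    (h : ∀ i < m, B.coeff i ^ p = B.coeff i) :
    (frobenius B - B).coeff m = B.coeff m ^ p - B.coeff m := by
  rw [coeff_sub_of_coeff_eq (fun i hi => by rw [coeff_frobenius_charP, h i hi]),
    coeff_frobenius_charP]

theorem exists_coeff_mem_add_frobenius_sub (hS : Codisjoint S (artinSchreier R p).range)
    (G : 𝕎 R) (m : ℕ) :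
    ∃ F B : 𝕎 R, (∀ i < m, F.coeff i ∈ S) ∧ G = F + (frobenius B - B) := by
  induction m with
  | zero => exact ⟨G, 0, by simp, by simp⟩
  | succ m ih =>
    obtain ⟨F, B, hF, rfl⟩ := ih
    obtain ⟨s, hs, _, ⟨b, rfl⟩, hsb⟩ :=
      AddSubgroup.mem_sup.mp (codisjoint_iff.mp hS ▸ AddSubgroup.mem_top (F.coeff m))
    let w : 𝕎 R := mk p fun i => if i = m then b else 0
    have hw : ∀ i < m, w.coeff i ^ p = w.coeff i := fun i hi => by
      simp [w, hi.ne, zero_pow (Fact.out : p.Prime).ne_zero]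
    have hlow : ∀ i < m, (F - (frobenius w - w)).coeff i = F.coeff i := by
      have hd := (le_coeff_eq_iff_le_sub_coeff_eq_zero (x := frobenius w) (y := w)).mp
        fun i hi => by rw [coeff_frobenius_charP, hw i hi]
      refine fun i hi => (le_coeff_eq_iff_le_sub_coeff_eq_zero.mpr ?_ i hi).symm
      simpa using hd
    refine ⟨F - (frobenius w - w), B + w, fun i hi => ?_, by rw [map_add]; abel⟩
    rcases Nat.lt_succ_iff_lt_or_eq.mp hi with hi | rfl
    · rw [hlow i hi]
      exact hF i hi
    · have hm := coeff_sub_of_coeff_eq (fun j hj => (hlow j hj).symm)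
      rw [sub_sub_cancel, coeff_frobenius_sub_self_of_coeff_pow_eq hw] at hm
      simp only [w, coeff_mk, if_true, ← hsb, artinSchreier_apply] at hm
      rwa [show (F - (frobenius w - w)).coeff i = s by linear_combination hm]

theorem coeff_eq_of_sub_eq_frobenius_sub (hS : Disjoint S (artinSchreier R p).range)
    {F' F'' B : 𝕎 R} {n : ℕ} (hF' : ∀ i < n, F'.coeff i ∈ S)
    (hF'' : ∀ i < n, F''.coeff i ∈ S)
    (h : ∀ i < n, (F' - F'').coeff i = (frobenius B - B).coeff i) :
    ∀ i < n, F'.coeff i = F''.coeff i := by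
  suffices ∀ m ≤ n,
      (∀ i < m, F'.coeff i = F''.coeff i) ∧ ∀ i < m, B.coeff i ^ p = B.coeff i from
    (this n le_rfl).1
  intro m
  induction m with
  | zero => simp
  | succ m ih =>
    intro hm
    obtain ⟨hF, hB⟩ := ih (by omega)
    have key := h m (by omega)
    rw [coeff_sub_of_coeff_eq hF, coeff_frobenius_sub_self_of_coeff_pow_eq hB] at key
    have hzero : F'.coeff m - F''.coeff m = 0 :=
      AddSubgroup.disjoint_def.mp hS (S.sub_mem (hF' m (by omega)) (hF'' m (by omega)))
        ⟨B.coeff m, key.symm⟩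
    rw [hzero, eq_comm, sub_eq_zero] at key
    have hstep {P : ℕ → Prop} (hlt : ∀ i < m, P i) (hm : P m) : ∀ i < m + 1, P i :=
      fun i hi => (Nat.lt_succ_iff_lt_or_eq.mp hi).elim (hlt i) (· ▸ hm)
    exact ⟨hstep hF (sub_eq_zero.mp hzero), hstep hB key⟩

end WittVector

section LaurentSeries

variable {K : Type*} [Field K]

namespace LaurentSeries

theorem coeff_pow_nsmul_order (x : LaurentSeries K) (n : ℕ) :
    (x ^ n).coeff (n • x.order) = x.leadingCoeff ^ n := by
  induction n with
  | zero => simp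
  | succ n ih =>
    rw [pow_succ, succ_nsmul, ← order_pow, coeff_mul_order_add_order, leadingCoeff_eq,
      order_pow, ih, pow_succ, leadingCoeff_eq]

theorem order_inv (x : LaurentSeries K) : x⁻¹.order = -x.order := by
  rcases eq_or_ne x 0 with rfl | hx
  · simp
  · have := order_mul (inv_ne_zero hx) hx
    rw [inv_mul_cancel₀ hx, order_one] at this
    omega

theorem order_nonneg_of_coeff_pow_sub_self {n : ℕ} (hn : 1 < n) {x : LaurentSeries K}
    (h : ∀ m < 0, (x ^ n - x).coeff (n * m) = 0) : 0 ≤ x.order := by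
  by_contra! hneg
  have hx : x ≠ 0 := fun hx => by simp [hx] at hneg
  have hlt : n * x.order < x.order := by nlinarith
  have := h x.order hneg
  rw [HahnSeries.coeff_sub, coeff_eq_zero_of_lt_order hlt, sub_zero, ← nsmul_eq_mul,
    coeff_pow_nsmul_order] at this
  exact pow_ne_zero n (leadingCoeff_ne_zero.mpr hx) this

theorem coeff_single_neg_eq_zero_of_dvd {p : ℕ} {z : ℤ} {j : ℕ} (hpz : (p : ℤ) ∣ z)
    (hpj : ¬ p ∣ j) : (single (-(j : ℤ)) (1 : K)).coeff z = 0 :=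
  coeff_single_of_ne fun h => hpj (Int.natCast_dvd_natCast.mp (by simpa [h] using hpz))

end LaurentSeries

theorem Polynomial.aeval_single_one_eq (P : K[X]) :
    aeval (single (1 : ℤ) (1 : K)) P = ofPowerSeries ℤ K (P : PowerSeries K) := by
  induction P using Polynomial.induction_on' with
  | add p q hp hq => simp [hp, hq]
  | monomial n c =>
    simp [← C_mul_X_pow_eq_monomial, LaurentSeries.algebraMap_apply, HahnSeries.C_apply]

theorem Polynomial.coeff_aeval_single_one (P : K[X]) (z : ℤ) :
    (aeval (single (1 : ℤ) (1 : K)) P).coeff z = if z < 0 then 0 else P.coeff z.natAbs := by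
  rw [aeval_single_one_eq, PowerSeries.coeff_coe, Polynomial.coeff_coe]

theorem Polynomial.order_aeval_single_one_nonneg (P : K[X]) :
    0 ≤ (aeval (single (1 : ℤ) (1 : K)) P).order := by
  rcases eq_or_ne (aeval (single (1 : ℤ) (1 : K)) P) 0 with h | h
  · simp [h]
  · exact (le_order_iff_forall h).mpr fun z hz => by simp [coeff_aeval_single_one, hz]

theorem Polynomial.order_aeval_single_one {P : K[X]} (hP : P.coeff 0 ≠ 0) :
    (aeval (single (1 : ℤ) (1 : K)) P).order = 0 :=
  le_antisymm (order_le_of_coeff_ne_zero (by simpa [coeff_aeval_single_one] using hP))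
    (order_aeval_single_one_nonneg P)

namespace LaurentSeries

theorem transcendental_single_one : Transcendental K (single (1 : ℤ) (1 : K)) := by
  refine transcendental_iff_injective.mpr fun P Q h => Polynomial.ext fun n => ?_
  simpa [coeff_aeval_single_one, (Int.natCast_nonneg n).not_gt] using
    congrArg (HahnSeries.coeff · (n : ℤ)) h

theorem aeval_single_one_X_add_C (a : K) :
    aeval (single (1 : ℤ) (1 : K)) (X + Polynomial.C a) = single 1 1 + HahnSeries.C a := by
  simp [LaurentSeries.algebraMap_apply]

theorem transcendental_single_one_add_C (a : K) :
    Transcendental K (single (1 : ℤ) (1 : K) + HahnSeries.C a) :=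
  aeval_single_one_X_add_C a ▸ transcendental_single_one.aeval _ (by simp) (by simp)

theorem transcendental_single_one_inv : Transcendental K (single (1 : ℤ) (1 : K))⁻¹ :=
  fun h => transcendental_single_one (IsAlgebraic.inv_iff.mp h)

end LaurentSeries

end LaurentSeries

namespace RatFunc

variable {k : Type*} [Field k]

theorem exists_eq_algebraMap_add_sum_smul_inv_pow [IsAlgClosed k] (g : RatFunc k) :
    ∃ (q : k[X]) (s : Finset k) (m : k → ℕ) (c : (a : k) → Fin (m a) → k),
      g = algebraMap k[X] (RatFunc k) q +
        ∑ a ∈ s, ∑ j, c a j • (X - C a)⁻¹ ^ (j.1 + 1) := by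
  classical
  set s := g.denom.roots.toFinset
  have hdenom :
      g.denom = ∏ a ∈ s, (Polynomial.X - Polynomial.C a) ^ g.denom.rootMultiplicity a := by
    conv_lhs => rw [← prod_multiset_X_sub_C_of_monic_of_roots_card_eq (monic_denom g)
      IsAlgClosed.card_roots_eq_natDegree]
    simp only [Finset.prod_multiset_map_count, count_roots, s]
  have hinv (a : k) :
      (X - C a)⁻¹ * algebraMap k[X] (RatFunc k) (Polynomial.X - Polynomial.C a) = 1 := by
    have h := algebraMap_ne_zero (X_sub_C_ne_zero a)
    rw [map_sub, algebraMap_X, algebraMap_C] at h ⊢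
    exact inv_mul_cancel₀ h
  obtain ⟨q, r, hr, hg⟩ := mul_prod_pow_inverse_eq_quo_add_sum_rem_mul_pow_inverse
    (K := RatFunc k) g.num (s := s) (fun a _ => monic_X_sub_C a)
    (fun a _ b _ hab => pairwise_coprime_X_sub_C (s := id) Function.injective_id hab)
    (fun a => g.denom.rootMultiplicity a) (fun a _ => hinv a)
  refine ⟨q, s, _, fun a j => (r a j).coeff 0, ?_⟩
  have hg' : g = algebraMap k[X] (RatFunc k) g.num *
      ∏ a ∈ s, (X - C a)⁻¹ ^ g.denom.rootMultiplicity a := by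
    conv_lhs => rw [← num_div_denom g, hdenom]
    simp [div_eq_mul_inv, map_prod, Finset.prod_inv_distrib]
  refine hg'.trans (hg.trans ?_)
  congr 1
  refine Finset.sum_congr rfl fun a ha => Fintype.sum_congr _ _ fun j => ?_
  have hc : r a j = Polynomial.C ((r a j).coeff 0) :=
    eq_C_of_degree_le_zero (Nat.WithBot.lt_one_iff_le_zero.mp (by simpa using hr a ha j))
  rw [hc, algebraMap_C, smul_eq_C_mul]

noncomputable def laurentEval (s : LaurentSeries k) (hs : Transcendental k s) :
    RatFunc k →ₐ[k] LaurentSeries k :=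
  (IntermediateField.val _).comp (algEquivOfTranscendental s hs).toAlgHom

@[simp]
theorem laurentEval_algebraMap {s : LaurentSeries k} (hs : Transcendental k s) (Q : k[X]) :
    laurentEval s hs (algebraMap k[X] (RatFunc k) Q) = aeval s Q := by
  simp [laurentEval]

@[simp]
theorem laurentEval_X {s : LaurentSeries k} (hs : Transcendental k s) :
    laurentEval s hs X = s := by
  simp [laurentEval]

theorem laurentEval_C {s : LaurentSeries k} (hs : Transcendental k s) (c : k) :
    laurentEval s hs (C c) = HahnSeries.C c := by
  rw [← algebraMap_eq_C, AlgHom.commutes, LaurentSeries.algebraMap_apply]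

/-- The Laurent expansion at `x = a`, in the uniformiser `x - a`. -/
noncomputable def expansionAt (a : k) : RatFunc k →ₐ[k] LaurentSeries k :=
  laurentEval _ (LaurentSeries.transcendental_single_one_add_C a)

/-- The Laurent expansion at `x = ∞`, in the uniformiser `1 / x`. -/
noncomputable def expansionAtInfty : RatFunc k →ₐ[k] LaurentSeries k :=
  laurentEval _ LaurentSeries.transcendental_single_one_inv

theorem expansionAt_algebraMap (a : k) (Q : k[X]) :
    expansionAt a (algebraMap k[X] (RatFunc k) Q) =
      aeval (single (1 : ℤ) (1 : k)) (taylor a Q) := by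
  rw [expansionAt, laurentEval_algebraMap, taylor_apply, aeval_comp,
    LaurentSeries.aeval_single_one_X_add_C]

theorem expansionAt_X_sub_C (a : k) : expansionAt a (X - C a) = single 1 1 := by
  rw [← algebraMap_X, ← algebraMap_C, ← map_sub, expansionAt_algebraMap]
  simp

theorem order_expansionAt_algebraMap_nonneg (a : k) (Q : k[X]) :
    0 ≤ (expansionAt a (algebraMap k[X] (RatFunc k) Q)).order := by
  rw [expansionAt_algebraMap]
  exact order_aeval_single_one_nonneg _

theorem order_expansionAt_algebraMap_of_eval_ne_zero {a : k} {Q : k[X]} (h : Q.eval a ≠ 0) :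
    (expansionAt a (algebraMap k[X] (RatFunc k) Q)).order = 0 := by
  rw [expansionAt_algebraMap]
  exact order_aeval_single_one (by rwa [taylor_coeff_zero])

theorem order_expansionAt_algebraMap_pos {a : k} {Q : k[X]} (hQ : Q ≠ 0) (h : Q.IsRoot a) :
    0 < (expansionAt a (algebraMap k[X] (RatFunc k) Q)).order := by
  obtain ⟨Q', rfl⟩ := dvd_iff_isRoot.mpr h
  have hQ' : algebraMap k[X] (RatFunc k) Q' ≠ 0 := algebraMap_ne_zero (right_ne_zero_of_mul hQ)
  rw [map_mul, map_mul, map_sub, algebraMap_X, algebraMap_C, expansionAt_X_sub_C,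
    order_mul (by simp) ((map_ne_zero (expansionAt a)).mpr hQ'), order_single one_ne_zero]
  linarith [order_expansionAt_algebraMap_nonneg a Q']

theorem order_expansionAtInfty_algebraMap {Q : k[X]} (hQ : Q ≠ 0) :
    (expansionAtInfty (algebraMap k[X] (RatFunc k) Q)).order = -Q.natDegree := by
  have hT : (single (1 : ℤ) (1 : k))⁻¹ ≠ 0 := by simp
  let := invertibleOfNonzero hT
  have hrev : aeval (single (1 : ℤ) (1 : k)) Q.reverse * (single 1 1)⁻¹ ^ Q.natDegree =
      aeval (single (1 : ℤ) (1 : k))⁻¹ Q := by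
    have := eval₂_reverse_mul_pow (algebraMap k (LaurentSeries k))
      (single (1 : ℤ) (1 : k))⁻¹ Q
    rwa [invOf_eq_inv, inv_inv, ← aeval_def, ← aeval_def] at this
  have hrev0 : aeval (single (1 : ℤ) (1 : k)) Q.reverse ≠ 0 := fun h => by
    refine leadingCoeff_ne_zero.mpr hQ ?_
    simpa [h, coeff_zero_reverse] using (coeff_aeval_single_one Q.reverse 0).symm
  rw [expansionAtInfty, laurentEval_algebraMap, ← hrev, order_mul hrev0 (pow_ne_zero _ hT),
    order_aeval_single_one (by simpa [coeff_zero_reverse] using hQ), order_pow,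
    LaurentSeries.order_inv, order_single one_ne_zero]
  simp

theorem order_expansionAt_neg_of_isRoot_denom {a : k} {b : RatFunc k} (h : b.denom.IsRoot a) :
    (expansionAt a b).order < 0 := by
  have hb : b ≠ 0 := by rintro rfl; simp at h
  have hnum : b.num.eval a ≠ 0 := fun h' => by
    obtain ⟨u, v, huv⟩ := isCoprime_num_denom b
    simpa [h', h.eq_zero] using congrArg (Polynomial.eval a) huv
  have hquot := congrArg (expansionAt a) (num_div_denom b)
  rw [map_div₀, div_eq_mul_inv] at hquot
  rw [← hquot, order_mul, LaurentSeries.order_inv,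
    order_expansionAt_algebraMap_of_eval_ne_zero hnum]
  · linarith [order_expansionAt_algebraMap_pos (denom_ne_zero b) h]
  · exact (_root_.map_ne_zero _).mpr (algebraMap_ne_zero (num_ne_zero hb))
  · exact inv_ne_zero ((_root_.map_ne_zero _).mpr (algebraMap_ne_zero (denom_ne_zero b)))

theorem exists_eq_C_of_order_expansion_nonneg [IsAlgClosed k] {b : RatFunc k}
    (hfin : ∀ a, 0 ≤ (expansionAt a b).order) (hinf : 0 ≤ (expansionAtInfty b).order) :
    ∃ c, b = C c := by
  have hdenom : b.denom = 1 := by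
    by_contra h
    obtain ⟨a, ha⟩ := IsAlgClosed.exists_root b.denom fun h' =>
      h (eq_one_of_monic_natDegree_zero (monic_denom b) (natDegree_eq_of_degree_eq_some h'))
    exact (order_expansionAt_neg_of_isRoot_denom ha).not_ge (hfin a)
  have hb : b = algebraMap k[X] (RatFunc k) b.num := by
    conv_lhs => rw [← num_div_denom b, hdenom, map_one, div_one]
  rcases eq_or_ne b.num 0 with h0 | h0
  · exact ⟨0, by rw [hb, h0, map_zero, map_zero]⟩
  have hdeg : b.num.natDegree = 0 := by
    have := order_expansionAtInfty_algebraMap h0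
    rw [← hb] at this
    omega
  obtain ⟨c, hc⟩ : ∃ c, b.num = Polynomial.C c := ⟨_, eq_C_of_natDegree_eq_zero hdeg⟩
  exact ⟨c, by rw [hb, hc, algebraMap_C]⟩

end RatFunc

noncomputable def reducedSubmodule (p : ℕ) (k : Type) [Field k] : Submodule k (RatFunc k) :=
  Submodule.span k
    ({g : RatFunc k | ∃ (a : k) (j : ℕ), 0 < j ∧ ¬ p ∣ j ∧
        g = ((RatFunc.X - RatFunc.C a) ^ j)⁻¹} ∪
      {g : RatFunc k | ∃ j : ℕ, 0 < j ∧ ¬ p ∣ j ∧ g = RatFunc.X ^ j})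

namespace RatFunc

variable {p : ℕ} {k : Type} [Field k]

theorem coeff_eq_zero_of_mem_reducedSubmodule (e : RatFunc k →ₐ[k] LaurentSeries k) {z : ℤ}
    (hpole : ∀ a j, 0 < j → ¬ p ∣ j → (e ((X - C a) ^ j)⁻¹).coeff z = 0)
    (hmono : ∀ j, 0 < j → ¬ p ∣ j → (e (X ^ j)).coeff z = 0) {f : RatFunc k}
    (hf : f ∈ reducedSubmodule p k) : (e f).coeff z = 0 := by
  induction hf using Submodule.span_induction with
  | mem g hg =>
    obtain ⟨a, j, hj, hpj, rfl⟩ | ⟨j, hj, hpj, rfl⟩ := hg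
    exacts [hpole a j hj hpj, hmono j hj hpj]
  | zero => simp
  | add x y _ _ hx hy => simp [hx, hy]
  | smul c x _ hx =>
    rw [Algebra.smul_def, map_mul, AlgHom.commutes, LaurentSeries.algebraMap_apply,
      C_mul_eq_smul, HahnSeries.coeff_smul, hx, smul_zero]

theorem coeff_expansionAt_eq_zero_of_mem_reducedSubmodule {f : RatFunc k}
    (hf : f ∈ reducedSubmodule p k) (a : k) {z : ℤ} (hz : z < 0) (hpz : (p : ℤ) ∣ z) :
    (expansionAt a f).coeff z = 0 := by
  refine coeff_eq_zero_of_mem_reducedSubmodule _ (fun a' j hj hpj => ?_) (fun j _ _ => ?_) hf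
  · rw [map_inv₀, map_pow]
    rcases eq_or_ne a' a with rfl | ha
    · rw [expansionAt_X_sub_C, single_pow, inv_single]
      simpa using LaurentSeries.coeff_single_neg_eq_zero_of_dvd (K := k) hpz hpj
    · refine coeff_eq_zero_of_lt_order ?_
      rw [LaurentSeries.order_inv, order_pow, ← algebraMap_X, ← algebraMap_C, ← map_sub,
        order_expansionAt_algebraMap_of_eval_ne_zero (by simpa [sub_eq_zero] using ha.symm)]
      simpa using hz
  · refine coeff_eq_zero_of_lt_order (hz.trans_le ?_)
    rw [map_pow, order_pow, ← algebraMap_X]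
    exact nsmul_nonneg (order_expansionAt_algebraMap_nonneg a _) j

theorem coeff_expansionAtInfty_eq_zero_of_mem_reducedSubmodule {f : RatFunc k}
    (hf : f ∈ reducedSubmodule p k) {z : ℤ} (hz : z ≤ 0) (hpz : (p : ℤ) ∣ z) :
    (expansionAtInfty f).coeff z = 0 := by
  refine coeff_eq_zero_of_mem_reducedSubmodule _ (fun a j hj _ => ?_) (fun j _ hpj => ?_) hf
  · refine coeff_eq_zero_of_lt_order (hz.trans_lt ?_)
    rw [map_inv₀, map_pow, LaurentSeries.order_inv, order_pow, ← algebraMap_X,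
      ← algebraMap_C, ← map_sub, order_expansionAtInfty_algebraMap (X_sub_C_ne_zero a),
      natDegree_X_sub_C]
    simpa using hj
  · rw [map_pow, expansionAtInfty, laurentEval_X, inv_single, single_pow]
    simpa using LaurentSeries.coeff_single_neg_eq_zero_of_dvd (K := k) hpz hpj

variable [Fact p.Prime] [CharP k p] [IsAlgClosed k]

theorem algebraMap_mem_reducedSubmodule_sup (q : k[X]) :
    algebraMap k[X] (RatFunc k) q ∈
      (reducedSubmodule p k).toAddSubgroup ⊔ (artinSchreier (RatFunc k) p).range := by
  induction q using Polynomial.induction_on' with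
  | add q₁ q₂ h₁ h₂ => rw [map_add]; exact add_mem h₁ h₂
  | monomial j c =>
    rw [← C_mul_X_pow_eq_monomial, map_mul, map_pow, algebraMap_C, algebraMap_X]
    rcases j.eq_zero_or_pos with rfl | hj
    · rw [pow_zero, mul_one, ← algebraMap_eq_C]
      exact AddSubgroup.mem_sup_right
        (algebraMap_mem_range_artinSchreier (Fact.out : p.Prime).one_lt c)
    · rw [← smul_eq_C_mul]
      exact smul_pow_mem_sup_range_artinSchreier (reducedSubmodule p k) (u := X)
        (fun j hj hpj => Submodule.subset_span (Or.inr ⟨j, hj, hpj, rfl⟩)) c hj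

theorem codisjoint_reducedSubmodule_range_artinSchreier :
    Codisjoint (reducedSubmodule p k).toAddSubgroup (artinSchreier (RatFunc k) p).range := by
  refine codisjoint_iff.mpr (eq_top_iff.mpr fun g _ => ?_)
  obtain ⟨q, s, m, c, rfl⟩ := exists_eq_algebraMap_add_sum_smul_inv_pow g
  refine add_mem (algebraMap_mem_reducedSubmodule_sup q)
    (AddSubgroup.sum_mem _ fun a _ => AddSubgroup.sum_mem _ fun j _ => ?_)
  exact smul_pow_mem_sup_range_artinSchreier (reducedSubmodule p k) (u := (X - C a)⁻¹)
    (fun j hj hpj => Submodule.subset_span (Or.inl ⟨a, j, hj, hpj, inv_pow _ _⟩)) _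
    j.1.succ_pos

theorem disjoint_reducedSubmodule_range_artinSchreier :
    Disjoint (reducedSubmodule p k).toAddSubgroup (artinSchreier (RatFunc k) p).range := by
  refine AddSubgroup.disjoint_def.mpr ?_
  rintro _ hf ⟨b, rfl⟩
  have hp : 0 < (p : ℤ) := by exact_mod_cast (Fact.out : p.Prime).pos
  have order_nonneg (e : RatFunc k →ₐ[k] LaurentSeries k)
      (he : ∀ m < 0, (e (artinSchreier _ p b)).coeff (p * m) = 0) : 0 ≤ (e b).order :=
    LaurentSeries.order_nonneg_of_coeff_pow_sub_self (Fact.out : p.Prime).one_lt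
      (by simpa using he)
  obtain ⟨c, rfl⟩ := exists_eq_C_of_order_expansion_nonneg
    (fun a => order_nonneg _ fun m hm =>
      coeff_expansionAt_eq_zero_of_mem_reducedSubmodule hf a (mul_neg_of_pos_of_neg hp hm)
        (dvd_mul_right _ _))
    (order_nonneg _ fun m hm => coeff_expansionAtInfty_eq_zero_of_mem_reducedSubmodule hf
      (mul_neg_of_pos_of_neg hp hm).le (dvd_mul_right _ _))
  have h0 := coeff_expansionAtInfty_eq_zero_of_mem_reducedSubmodule hf le_rfl (dvd_zero _)
  rw [artinSchreier_apply, ← map_pow, ← map_sub] at h0 ⊢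
  rw [expansionAtInfty, laurentEval_C, C_apply, coeff_single_same] at h0
  rw [h0, map_zero]

theorem isCompl_reducedSubmodule_range_artinSchreier :
    IsCompl (reducedSubmodule p k).toAddSubgroup (artinSchreier (RatFunc k) p).range :=
  ⟨disjoint_reducedSubmodule_range_artinSchreier,
    codisjoint_reducedSubmodule_range_artinSchreier⟩

end RatFunc

theorem aswIsogeny_truncate {p : ℕ} [Fact p.Prime] {k : Type} [Field k] [CharP k p] (n : ℕ)
    (B : WittVector p (RatFunc k)) :
    aswIsogeny p n k (WittVector.truncate n B) =
      WittVector.truncate n (WittVector.frobenius B - B) := by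
  rw [aswIsogeny, map_sub]
  congr 1
  ext i
  rw [TruncatedWittVector.coeff_mk, WittVector.coeff_truncate, WittVector.coeff_truncate,
    WittVector.coeff_frobenius_charP]

theorem reduced_witt_representative_general
    (p : ℕ) [Fact p.Prime] (k : Type) [Field k] [IsAlgClosed k] [CharP k p]
    (n : ℕ) :
    (∀ G : TruncatedWittVector p n (RatFunc k),
      ∃ F : TruncatedWittVector p n (RatFunc k),
        (∀ i : Fin n, IsReducedRatFunc p k (TruncatedWittVector.coeff i F)) ∧
        ∃ B : TruncatedWittVector p n (RatFunc k), G = F + aswIsogeny p n k B) ∧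
    (∀ F' F'' : TruncatedWittVector p n (RatFunc k),
      (∀ i : Fin n, IsReducedRatFunc p k (TruncatedWittVector.coeff i F')) →
      (∀ i : Fin n, IsReducedRatFunc p k (TruncatedWittVector.coeff i F'')) →
      (∃ B : TruncatedWittVector p n (RatFunc k), F' - F'' = aswIsogeny p n k B) →
      F' = F'') := by
  have hS := RatFunc.isCompl_reducedSubmodule_range_artinSchreier (p := p) (k := k)
  have hsurj := WittVector.truncate_surjective p n (RatFunc k)
  constructor
  · intro G
    obtain ⟨G, rfl⟩ := hsurj G
    obtain ⟨F, B, hF, rfl⟩ := WittVector.exists_coeff_mem_add_frobenius_sub hS.codisjoint G n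
    refine ⟨WittVector.truncate n F, fun i => ?_, WittVector.truncate n B, ?_⟩
    · rw [WittVector.coeff_truncate]
      exact hF i i.isLt
    · rw [aswIsogeny_truncate, map_add]
  · rintro F' F'' hF' hF'' ⟨B, hB⟩
    obtain ⟨F', rfl⟩ := hsurj F'
    obtain ⟨F'', rfl⟩ := hsurj F''
    obtain ⟨B, rfl⟩ := hsurj B
    rw [aswIsogeny_truncate, ← map_sub] at hB
    have hcoeff := WittVector.coeff_eq_of_sub_eq_frobenius_sub hS.disjoint
      (fun i hi => by have := hF' ⟨i, hi⟩; rwa [WittVector.coeff_truncate] at this)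
      (fun i hi => by have := hF'' ⟨i, hi⟩; rwa [WittVector.coeff_truncate] at this)
      (fun i hi => by
        have := congrArg (TruncatedWittVector.coeff ⟨i, hi⟩) hB
        rwa [WittVector.coeff_truncate, WittVector.coeff_truncate] at this)
    ext i
    rw [WittVector.coeff_truncate, WittVector.coeff_truncate]
    exact hcoeff i i.isLt

/-- **Existence and uniqueness of reduced representatives of Artin–Schreier–Witt classes**
(see §2.2 of the paper): let `k` be an algebraically closed field of characteristic
`p > 0`. Every length-`n` truncated Witt vector `G` over `k(x)` is congruent modulo
`℘(W_n(k(x)))` to a Witt vector all of whose components are reduced, and this reduced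
representative is unique: two reduced Witt vectors in the same Artin–Schreier–Witt class
are equal. -/
theorem reduced_witt_representative
    (p : ℕ) [Fact p.Prime] (k : Type) [Field k] [IsAlgClosed k] [CharP k p]
    (n : ℕ) (hn : 1 ≤ n) :
    (∀ G : TruncatedWittVector p n (RatFunc k),
      ∃ F : TruncatedWittVector p n (RatFunc k),
        (∀ i : Fin n, IsReducedRatFunc p k (TruncatedWittVector.coeff i F)) ∧
        ∃ B : TruncatedWittVector p n (RatFunc k), G = F + aswIsogeny p n k B) ∧
    (∀ F' F'' : TruncatedWittVector p n (RatFunc k),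
      (∀ i : Fin n, IsReducedRatFunc p k (TruncatedWittVector.coeff i F')) →
      (∀ i : Fin n, IsReducedRatFunc p k (TruncatedWittVector.coeff i F'')) →
      (∃ B : TruncatedWittVector p n (RatFunc k), F' - F'' = aswIsogeny p n k B) →
      F' = F'') :=
  reduced_witt_representative_general p k n
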